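/- Let $h,q$ be coprime integers with $q > 1$. For $\Re(s) > 1$, $\log L(s, \psi_{h/q}) = \sum_{p} \sum_{k=1}^\infty \frac{e^{2\pi i h p^k/q}}{k\, p^{sk}} + T_{h,q}(s)$, where $T_{h,q}(s) := \sum_{p} \sum_{k=2}^\infty \frac{e^{2\pi i p h k/q} - e^{2\pi i p^k h/q}}{k\, p^{sk}}$; moreover, for any $\epsilon > 0$, $T_{h,q}(s)$ is holomorphic for $\Re(s) > \tfrac12 + \epsilon$ and satisfies $|T_{h,q}(s)| = O_\epsilon(1)$ there, with the implied constant independent of $q$ and depending at most on $\epsilon$. -/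

import Mathlib

open Complex Finset Filter Asymptotics intervalIntegral
open scoped Real Topology Classical

noncomputable section

/-- The additive prime divisor function `A(n) = ∑_{p^α ∥ n} α p`. -/
def Apd (n : ℕ) : ℕ := n.factorization.sum fun p a => a * p

/-- The completely multiplicative function `ψ_{h/q}(n) = e^{2πi h A(n)/q}`. -/
def psiA (h : ℤ) (q : ℕ) (n : ℕ) : ℂ :=
  Complex.exp (2 * (Real.pi : ℂ) * Complex.I * (h : ℂ) * (Apd n : ℂ) / (q : ℂ))

/-- The summatory function `∑_{n ≤ x} ψ_{h/q}(n)`. -/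
def Spsi (h : ℤ) (q : ℕ) (x : ℝ) : ℂ := ∑ n ∈ Finset.Icc 1 ⌊x⌋₊, psiA h q n

/-- The Dirichlet series `L(s, ψ_{h/q})`. -/
def Lpsi (h : ℤ) (q : ℕ) (s : ℂ) : ℂ := ∑' n : ℕ, psiA h q n / (n : ℂ) ^ s

/-- the ratio μ(q)/φ(q) -/
def mphi (q : ℕ) : ℝ := (ArithmeticFunction.moebius q : ℝ) / (Nat.totient q : ℝ)

/-- Gauss sum τ(χ) = ∑_{ℓ mod q} χ(ℓ) e^{2πiℓ/q}. -/
def gaussS {q : ℕ} (χ : DirichletCharacter ℂ q) : ℂ :=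
  ∑ l ∈ Finset.range q, χ (l : ZMod q) * Complex.exp (2 * (Real.pi : ℂ) * Complex.I * (l : ℂ) / (q : ℂ))

/-- conjugate Dirichlet character -/
def conjChar {q : ℕ} (χ : DirichletCharacter ℂ q) : DirichletCharacter ℂ q :=
  χ.ringHomComp (starRingEnd ℂ)

/-- `T_{h,q}(s) = ∑_p ∑_{k ≥ 2} (e^{2πiphk/q} - e^{2πip^k h/q})/(k p^{sk})`. -/
def Thq (h : ℤ) (q : ℕ) (s : ℂ) : ℂ :=
  ∑' (p : Nat.Primes) (k : ℕ),
    (Complex.exp (2 * (Real.pi : ℂ) * Complex.I * ((p : ℕ) : ℂ) * (h : ℂ) * ((k : ℂ) + 2) / (q : ℂ))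
      - Complex.exp (2 * (Real.pi : ℂ) * Complex.I * (((p : ℕ) : ℂ) ^ (k + 2)) * (h : ℂ) / (q : ℂ)))
      / (((k : ℂ) + 2) * ((p : ℕ) : ℂ) ^ (s * ((k : ℂ) + 2)))

/-- `U_{h,q}(s)`. -/
def Uhq (h : ℤ) (q : ℕ) (s : ℂ) : ℂ :=
  -((mphi q : ℝ) : ℂ) * ∑ p ∈ q.primeFactors, ∑' k : ℕ,
      1 / (((k : ℂ) + 1) * (p : ℂ) ^ (s * ((k : ℂ) + 1)))
  + ∑ p ∈ q.primeFactors, ∑' k : ℕ,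
      Complex.exp (2 * (Real.pi : ℂ) * Complex.I * (h : ℂ) * ((p : ℂ) ^ (k + 1)) / (q : ℂ))
        / (((k : ℂ) + 1) * (p : ℂ) ^ (s * ((k : ℂ) + 1)))
  + Thq h q s

/-- log of a Dirichlet L-function as absolutely convergent prime-power sum, for Re(s) > 1. -/
def plogChar {q : ℕ} (χ : DirichletCharacter ℂ q) (s : ℂ) : ℂ :=
  ∑' (p : Nat.Primes) (k : ℕ),
    χ (((p : ℕ) : ZMod q)) ^ (k + 1) / (((k : ℂ) + 1) * ((p : ℕ) : ℂ) ^ (s * ((k : ℂ) + 1)))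

/-- log of the Riemann zeta function as prime-power sum, for Re(s) > 1. -/
def plogZeta (s : ℂ) : ℂ :=
  ∑' (p : Nat.Primes) (k : ℕ),
    1 / (((k : ℂ) + 1) * ((p : ℕ) : ℂ) ^ (s * ((k : ℂ) + 1)))

/-- log L(s, ψ_{h/q}) = ∑_p ∑_{k≥1} e^{2πiphk/q}/(k p^{sk}). -/
def plogPsi (h : ℤ) (q : ℕ) (s : ℂ) : ℂ :=
  ∑' (p : Nat.Primes) (k : ℕ),
    Complex.exp (2 * (Real.pi : ℂ) * Complex.I * ((p : ℕ) : ℂ) * (h : ℂ) * ((k : ℂ) + 1) / (q : ℂ))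
      / (((k : ℂ) + 1) * ((p : ℕ) : ℂ) ^ (s * ((k : ℂ) + 1)))

/-- the sum ∑_p ∑_{k≥1} e^{2πi h p^k/q}/(k p^{sk}). -/
def plogPsiAlt (h : ℤ) (q : ℕ) (s : ℂ) : ℂ :=
  ∑' (p : Nat.Primes) (k : ℕ),
    Complex.exp (2 * (Real.pi : ℂ) * Complex.I * (h : ℂ) * (((p : ℕ) : ℂ) ^ (k + 1)) / (q : ℂ))
      / (((k : ℂ) + 1) * ((p : ℕ) : ℂ) ^ (s * ((k : ℂ) + 1)))

end

/-!
Write `e(x) = exp(2πix)`, so that `ψ(n) = e(h A(n)/q)`.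
Since `A(p^k) = k p`, the coefficient of `p^{-ks}/k` in `log L(s, ψ)` is `ψ(p)^k = e(hkp/q)`:
this is the Taylor series of `-log (1 - ψ(p) p^{-s})`, and the Euler product of the completely
multiplicative `ψ` turns its exponential into `L(s, ψ)`. The coefficients `e(hkp/q)` and
`e(hp^k/q)` agree for `k = 1`, so the two prime-power series differ by the `k ≥ 2` tail `T`.
A term of `T` has norm at most `2 p^{-2σ} 2^{-(k-2)σ}` with `σ = Re s`, and for `σ > 1/2` these
bounds are summable over pairs `(p, k)`, uniformly in `h` and `q`: `T` converges normally, hence is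
holomorphic and bounded there.
-/

lemma tsum_tsum_eq_add_tsum_tsum_succ_sub {E β : Type*} [NormedAddCommGroup E] [CompleteSpace E]
    {a b : β × ℕ → E} (ha : Summable a) (hb : Summable b) (h0 : ∀ i, a (i, 0) = b (i, 0)) :
    ∑' (i) (k), a (i, k) = ∑' (i) (k), b (i, k) + ∑' (i) (k), (a (i, k + 1) - b (i, k + 1)) := by
  have hshift : Function.Injective fun ik : β × ℕ => (ik.1, ik.2 + 1) :=
    fun x y hxy => by simp_all [Prod.ext_iff]
  have hd : Summable fun ik : β × ℕ => a (ik.1, ik.2 + 1) - b (ik.1, ik.2 + 1) :=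
    (ha.comp_injective hshift).sub (hb.comp_injective hshift)
  rw [← hb.prod.tsum_add hd.prod]
  refine tsum_congr fun i => ?_
  have hai := (summable_nat_add_iff 1).mpr (ha.prod_factor i)
  have hbi := (summable_nat_add_iff 1).mpr (hb.prod_factor i)
  rw [(ha.prod_factor i).tsum_eq_zero_add, (hb.prod_factor i).tsum_eq_zero_add, h0,
    hai.tsum_sub hbi]
  abel

lemma exp_tsum_primes_tsum_pow_div_eq_tsum {f : ℕ →*₀ ℂ} (hsum : Summable (‖f ·‖)) :
    Complex.exp (∑' (p : Nat.Primes) (k : ℕ), f p ^ (k + 1) / (k + 1)) = ∑' n, f n := by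
  rw [← EulerProduct.exp_tsum_primes_log_eq_tsum hsum]
  congr 1
  exact tsum_congr fun p => (Complex.hasSum_taylorSeries_neg_log'
    (hsum.of_norm.norm_lt_one (f := f.toMonoidHom) p.2.one_lt)).tsum_eq

noncomputable section PrimePowerSeries

-- The pair `(p, k)` stands for the prime power `p^(k + c)`.
def primePowerTerm (c : ℕ) (z : Nat.Primes → ℕ → ℂ) (s : ℂ) (pk : Nat.Primes × ℕ) : ℂ :=
  z pk.1 pk.2 / (((pk.2 : ℂ) + c) * ((pk.1 : ℕ) : ℂ) ^ (s * ((pk.2 : ℂ) + c)))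

def primePowerSeries (c : ℕ) (z : Nat.Primes → ℕ → ℂ) (s : ℂ) : ℂ :=
  ∑' (p : Nat.Primes) (k : ℕ), primePowerTerm c z s (p, k)

def primePowerMajorant (σ : ℝ) (c : ℕ) (pk : Nat.Primes × ℕ) : ℝ :=
  ((pk.1 : ℕ) : ℝ) ^ (-(σ * c)) * ((2 : ℝ) ^ (-σ)) ^ pk.2

variable {c : ℕ} {σ : ℝ}

lemma pos_and_ne_zero_of_one_lt_mul_natCast (hc : 1 < σ * c) : 0 < σ ∧ c ≠ 0 := by
  have hc0 : (0 : ℝ) ≤ c := c.cast_nonneg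
  refine ⟨?_, ?_⟩
  · by_contra! hσ
    nlinarith
  · rintro rfl
    norm_num at hc

lemma primePowerMajorant_nonneg (pk : Nat.Primes × ℕ) : 0 ≤ primePowerMajorant σ c pk := by
  unfold primePowerMajorant
  positivity

lemma norm_primePowerTerm_le (hc : c ≠ 0) (hσ : 0 ≤ σ) {s : ℂ} (hs : σ ≤ s.re)
    (z : Nat.Primes → ℕ → ℂ) (pk : Nat.Primes × ℕ) :
    ‖primePowerTerm c z s pk‖ ≤ ‖z pk.1 pk.2‖ * primePowerMajorant σ c pk := by
  obtain ⟨p, k⟩ := pk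
  have hp2 : (2 : ℝ) ≤ (p : ℕ) := mod_cast p.2.two_le
  have hp0 : (0 : ℝ) < (p : ℕ) := by linarith
  have hn : ((k : ℂ) + c) = ((k + c : ℕ) : ℂ) := by push_cast; ring
  have hn1 : (1 : ℝ) ≤ ((k + c : ℕ) : ℝ) := mod_cast (by omega : 1 ≤ k + c)
  have hden : ((p : ℕ) : ℝ) ^ (σ * (k + c : ℕ))
      ≤ ‖((k : ℂ) + c) * ((p : ℕ) : ℂ) ^ (s * ((k : ℂ) + c))‖ := by
    have hre : (s * ((k + c : ℕ) : ℂ)).re = s.re * (k + c : ℕ) := by simp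
    rw [hn, norm_mul, Complex.norm_natCast, Complex.norm_natCast_cpow_of_pos p.2.pos, hre]
    calc ((p : ℕ) : ℝ) ^ (σ * (k + c : ℕ)) ≤ ((p : ℕ) : ℝ) ^ (s.re * (k + c : ℕ)) :=
          Real.rpow_le_rpow_of_exponent_le (by linarith) (by gcongr)
      _ ≤ _ := le_mul_of_one_le_left (by positivity) hn1
  have hsplit : (((p : ℕ) : ℝ) ^ (σ * (k + c : ℕ)))⁻¹
      = ((p : ℕ) : ℝ) ^ (-(σ * c)) * (((p : ℕ) : ℝ) ^ (-σ)) ^ k := by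
    rw [← Real.rpow_natCast, ← Real.rpow_mul hp0.le, ← Real.rpow_add hp0, ← Real.rpow_neg hp0.le]
    push_cast
    ring_nf
  have hbase : ((p : ℕ) : ℝ) ^ (-σ) ≤ (2 : ℝ) ^ (-σ) :=
    Real.rpow_le_rpow_of_nonpos (by norm_num) hp2 (by linarith)
  unfold primePowerTerm primePowerMajorant
  rw [norm_div, div_eq_mul_inv]
  gcongr
  calc ‖((k : ℂ) + c) * ((p : ℕ) : ℂ) ^ (s * ((k : ℂ) + c))‖⁻¹
      ≤ (((p : ℕ) : ℝ) ^ (σ * (k + c : ℕ)))⁻¹ := inv_anti₀ (by positivity) hden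
    _ = _ := hsplit
    _ ≤ _ := by gcongr

lemma summable_primePowerMajorant (hc : 1 < σ * c) : Summable (primePowerMajorant σ c) := by
  have hσ := (pos_and_ne_zero_of_one_lt_mul_natCast hc).1
  refine Summable.mul_of_nonneg (Nat.Primes.summable_rpow.mpr (by linarith))
    (summable_geometric_of_lt_one (by positivity)
      (Real.rpow_lt_one_of_one_lt_of_neg (by norm_num) (by linarith)))
    (fun _ => by positivity) (fun _ => by positivity)

variable {z : Nat.Primes → ℕ → ℂ} {B : ℝ}

lemma norm_primePowerTerm_le_mul_majorant (hc : 1 < σ * c) {s : ℂ} (hs : σ ≤ s.re)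
    (hz : ∀ p k, ‖z p k‖ ≤ B) (pk : Nat.Primes × ℕ) :
    ‖primePowerTerm c z s pk‖ ≤ B * primePowerMajorant σ c pk := by
  obtain ⟨hσ, hc0⟩ := pos_and_ne_zero_of_one_lt_mul_natCast hc
  exact (norm_primePowerTerm_le hc0 hσ.le hs z pk).trans
    (mul_le_mul_of_nonneg_right (hz _ _) (primePowerMajorant_nonneg pk))

lemma summable_primePowerTerm (hc : 1 < σ * c) {s : ℂ} (hs : σ ≤ s.re)
    (hz : ∀ p k, ‖z p k‖ ≤ B) : Summable (primePowerTerm c z s) :=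
  .of_norm_bounded ((summable_primePowerMajorant hc).mul_left B)
    (norm_primePowerTerm_le_mul_majorant hc hs hz)

lemma primePowerSeries_eq_tsum (hc : 1 < σ * c) {s : ℂ} (hs : σ ≤ s.re)
    (hz : ∀ p k, ‖z p k‖ ≤ B) : primePowerSeries c z s = ∑' pk, primePowerTerm c z s pk :=
  (summable_primePowerTerm hc hs hz).tsum_prod.symm

lemma norm_primePowerSeries_le (hc : 1 < σ * c) {s : ℂ} (hs : σ ≤ s.re)
    (hz : ∀ p k, ‖z p k‖ ≤ B) :
    ‖primePowerSeries c z s‖ ≤ B * ∑' pk, primePowerMajorant σ c pk := by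
  rw [primePowerSeries_eq_tsum hc hs hz, ← tsum_mul_left]
  exact tsum_of_norm_bounded ((summable_primePowerMajorant hc).mul_left B).hasSum
    (norm_primePowerTerm_le_mul_majorant hc hs hz)

lemma differentiable_primePowerTerm (hc : c ≠ 0) (z : Nat.Primes → ℕ → ℂ) (pk : Nat.Primes × ℕ) :
    Differentiable ℂ fun s => primePowerTerm c z s pk := by
  have hp : ((pk.1 : ℕ) : ℂ) ≠ 0 := Nat.cast_ne_zero.mpr pk.1.2.ne_zero
  have hn : ((pk.2 : ℂ) + c) ≠ 0 := by exact_mod_cast (by omega : pk.2 + c ≠ 0)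
  unfold primePowerTerm
  refine (differentiable_const _).div
    ((differentiable_const _).mul ((differentiable_id.mul_const _).const_cpow (.inl hp)))
    fun s => mul_ne_zero hn (Complex.cpow_ne_zero_iff.mpr (.inl hp))

lemma differentiableOn_primePowerSeries (hc : 1 < σ * c) (hz : ∀ p k, ‖z p k‖ ≤ B) :
    DifferentiableOn ℂ (primePowerSeries c z) {s | σ < s.re} := by
  have hU : IsOpen {s : ℂ | σ < s.re} := isOpen_lt continuous_const Complex.continuous_re
  refine (differentiableOn_tsum_of_summable_norm ((summable_primePowerMajorant hc).mul_left B)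
      (fun pk => (differentiable_primePowerTerm (pos_and_ne_zero_of_one_lt_mul_natCast hc).2
        z pk).differentiableOn) hU
      fun pk s hs => norm_primePowerTerm_le_mul_majorant hc hs.le hz pk).congr
    fun s hs => primePowerSeries_eq_tsum hc hs.le hz

lemma primePowerSeries_one_eq_add {w : Nat.Primes → ℕ → ℂ} (hz : ∀ p k, ‖z p k‖ ≤ B)
    (hw : ∀ p k, ‖w p k‖ ≤ B) (h0 : ∀ p, z p 0 = w p 0) {s : ℂ} (hs : 1 < s.re) :
    primePowerSeries 1 z s =
      primePowerSeries 1 w s + primePowerSeries 2 (fun p k => z p (k + 1) - w p (k + 1)) s := by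
  have hc : 1 < s.re * (1 : ℕ) := by simpa using hs
  unfold primePowerSeries
  rw [tsum_tsum_eq_add_tsum_tsum_succ_sub (summable_primePowerTerm hc le_rfl hz)
    (summable_primePowerTerm hc le_rfl hw) fun p => by simp only [primePowerTerm, h0]]
  congr 1
  refine tsum_congr fun p => tsum_congr fun k => ?_
  have hk : ((k + 1 : ℕ) : ℂ) + (1 : ℕ) = k + (2 : ℕ) := by push_cast; ring
  simp only [primePowerTerm, ← sub_div, hk]

end PrimePowerSeries

noncomputable section AdditiveCharacter

open Complex

def eFrac (h : ℤ) (q n : ℕ) : ℂ :=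
  exp (2 * (Real.pi : ℂ) * I * (h : ℂ) * (n : ℂ) / (q : ℂ))

variable (h : ℤ) (q : ℕ)

lemma norm_eFrac (n : ℕ) : ‖eFrac h q n‖ = 1 := by
  rw [eFrac, show 2 * (Real.pi : ℂ) * I * h * n / q = ((2 * Real.pi * h * n / q : ℝ) : ℂ) * I by
    push_cast; ring]
  exact norm_exp_ofReal_mul_I _

lemma eFrac_zero : eFrac h q 0 = 1 := by simp [eFrac]

lemma eFrac_add (m n : ℕ) : eFrac h q (m + n) = eFrac h q m * eFrac h q n := by
  rw [eFrac, eFrac, eFrac, ← exp_add]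
  congr 1
  push_cast
  ring

end AdditiveCharacter

lemma Apd_one : Apd 1 = 0 := by simp [Apd]

lemma Apd_mul {m n : ℕ} (hm : m ≠ 0) (hn : n ≠ 0) : Apd (m * n) = Apd m + Apd n := by
  unfold Apd
  rw [Nat.factorization_mul hm hn]
  exact Finsupp.sum_add_index' (by simp) (by intros; ring)

lemma Apd_prime_pow {p : ℕ} (hp : p.Prime) (k : ℕ) : Apd (p ^ k) = k * p := by
  simp [Apd, hp.factorization_pow]

lemma Apd_prime {p : ℕ} (hp : p.Prime) : Apd p = p := by
  simpa using Apd_prime_pow hp 1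

section Psi

variable (h : ℤ) (q : ℕ)

lemma psiA_eq_eFrac (n : ℕ) : psiA h q n = eFrac h q (Apd n) := rfl

lemma norm_psiA (n : ℕ) : ‖psiA h q n‖ = 1 := norm_eFrac h q _

lemma psiA_one : psiA h q 1 = 1 := by rw [psiA_eq_eFrac, Apd_one, eFrac_zero]

lemma psiA_mul {m n : ℕ} (hm : m ≠ 0) (hn : n ≠ 0) :
    psiA h q (m * n) = psiA h q m * psiA h q n := by
  simp only [psiA_eq_eFrac, Apd_mul hm hn, eFrac_add]

noncomputable def psiSummandHom {s : ℂ} (hs : s ≠ 0) : ℕ →*₀ ℂ where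
  toFun n := psiA h q n * (n : ℂ) ^ (-s)
  map_zero' := by simp [Complex.zero_cpow (neg_ne_zero.mpr hs)]
  map_one' := by simp [psiA_one]
  map_mul' m n := by
    rcases eq_or_ne m 0 with rfl | hm
    · simp [Complex.zero_cpow (neg_ne_zero.mpr hs)]
    rcases eq_or_ne n 0 with rfl | hn
    · simp [Complex.zero_cpow (neg_ne_zero.mpr hs)]
    simp only [psiA_mul h q hm hn, Nat.cast_mul, Complex.natCast_mul_natCast_cpow]
    ring

variable {s : ℂ}

lemma summable_norm_psiSummandHom (hs : 1 < s.re) :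
    Summable (‖psiSummandHom h q (Complex.ne_zero_of_one_lt_re hs) ·‖) := by
  refine (Real.summable_nat_rpow.mpr (show -s.re < -1 by linarith)).congr fun n => ?_
  simp [psiSummandHom, norm_psiA, Complex.norm_natCast_cpow_of_re_ne_zero n
    (show (-s).re ≠ 0 by simp; linarith)]

lemma psiSummandHom_prime_pow_div (hs : s ≠ 0) (p : Nat.Primes) (k : ℕ) :
    psiSummandHom h q hs p ^ (k + 1) / (k + 1)
      = primePowerTerm 1 (fun p k => psiA h q ((p : ℕ) ^ (k + 1))) s (p, k) := by
  rw [← map_pow]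
  simp only [psiSummandHom, MonoidWithZeroHom.coe_mk, ZeroHom.coe_mk, primePowerTerm, Nat.cast_pow,
    ← Complex.natCast_cpow_natCast_mul, Nat.cast_one]
  rw [show ((k + 1 : ℕ) : ℂ) * -s = -(s * ((k : ℂ) + 1)) by push_cast; ring, Complex.cpow_neg]
  field_simp

lemma exp_primePowerSeries_psiA (hs : 1 < s.re) :
    Complex.exp (primePowerSeries 1 (fun p k => psiA h q ((p : ℕ) ^ (k + 1))) s) = Lpsi h q s := by
  convert exp_tsum_primes_tsum_pow_div_eq_tsum (summable_norm_psiSummandHom h q hs) using 2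
  · exact tsum_congr fun p => tsum_congr fun k => (psiSummandHom_prime_pow_div h q _ p k).symm
  · exact tsum_congr fun n => by simp [psiSummandHom, div_eq_mul_inv, Complex.cpow_neg]

lemma plogPsi_eq_primePowerSeries :
    plogPsi h q = primePowerSeries 1 (fun p k => psiA h q ((p : ℕ) ^ (k + 1))) := by
  ext s
  refine tsum_congr fun p => tsum_congr fun k => ?_
  rw [primePowerTerm, psiA_eq_eFrac, Apd_prime_pow p.2, eFrac]
  push_cast
  ring_nf

lemma plogPsiAlt_eq_primePowerSeries :
    plogPsiAlt h q = primePowerSeries 1 (fun p k => eFrac h q ((p : ℕ) ^ (k + 1))) := by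
  ext s
  refine tsum_congr fun p => tsum_congr fun k => ?_
  rw [primePowerTerm, eFrac]
  push_cast
  ring_nf

lemma Thq_eq_primePowerSeries :
    Thq h q = primePowerSeries 2
      (fun p k => psiA h q ((p : ℕ) ^ (k + 2)) - eFrac h q ((p : ℕ) ^ (k + 2))) := by
  ext s
  refine tsum_congr fun p => tsum_congr fun k => ?_
  rw [primePowerTerm, psiA_eq_eFrac, Apd_prime_pow p.2, eFrac, eFrac]
  push_cast
  ring_nf

end Psi

theorem stmt5_general (h : ℤ) (q : ℕ) :
    (∀ s : ℂ, 1 < s.re →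
        plogPsi h q s = plogPsiAlt h q s + Thq h q s ∧
        Complex.exp (plogPsi h q s) = Lpsi h q s) ∧
    ∀ ε : ℝ, 0 < ε →
      DifferentiableOn ℂ (Thq h q) {s : ℂ | 1 / 2 + ε < s.re} ∧
      ∃ C : ℝ, ∀ (h' : ℤ) (q' : ℕ), 1 < q' → IsCoprime h' (q' : ℤ) →
        ∀ s : ℂ, 1 / 2 + ε < s.re → ‖Thq h' q' s‖ ≤ C := by
  have hψ (h : ℤ) (q : ℕ) (p : Nat.Primes) (k : ℕ) : ‖psiA h q ((p : ℕ) ^ (k + 1))‖ ≤ 1 :=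
    (norm_psiA h q _).le
  have he (h : ℤ) (q : ℕ) (p : Nat.Primes) (k : ℕ) : ‖eFrac h q ((p : ℕ) ^ (k + 1))‖ ≤ 1 :=
    (norm_eFrac h q _).le
  have hT (h : ℤ) (q : ℕ) (p : Nat.Primes) (k : ℕ) :
      ‖psiA h q ((p : ℕ) ^ (k + 2)) - eFrac h q ((p : ℕ) ^ (k + 2))‖ ≤ 2 :=
    (norm_sub_le _ _).trans (by linarith [hψ h q p (k + 1), he h q p (k + 1)])
  refine ⟨fun s hs => ⟨?_, ?_⟩, fun ε hε => ?_⟩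
  · rw [plogPsi_eq_primePowerSeries, plogPsiAlt_eq_primePowerSeries, Thq_eq_primePowerSeries]
    refine primePowerSeries_one_eq_add (hψ h q) (he h q) (fun p => ?_) hs
    rw [zero_add, pow_one, psiA_eq_eFrac, Apd_prime p.2]
  · rw [plogPsi_eq_primePowerSeries]
    exact exp_primePowerSeries_psiA h q hs
  have hσ : 1 < (1 / 2 + ε) * (2 : ℕ) := by push_cast; linarith
  refine ⟨?_, ⟨2 * ∑' pk, primePowerMajorant (1 / 2 + ε) 2 pk, fun h' q' _ _ s hs => ?_⟩⟩
  · rw [Thq_eq_primePowerSeries]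
    exact differentiableOn_primePowerSeries hσ (hT h q)
  · rw [Thq_eq_primePowerSeries]
    exact norm_primePowerSeries_le hσ hs.le (hT h' q')

theorem stmt5 (h : ℤ) (q : ℕ) (hq : 1 < q) (hcop : IsCoprime h (q : ℤ)) :
    (∀ s : ℂ, 1 < s.re →
        plogPsi h q s = plogPsiAlt h q s + Thq h q s ∧
        Complex.exp (plogPsi h q s) = Lpsi h q s) ∧
    ∀ ε : ℝ, 0 < ε →
      DifferentiableOn ℂ (Thq h q) {s : ℂ | 1 / 2 + ε < s.re} ∧
      ∃ C : ℝ, ∀ (h' : ℤ) (q' : ℕ), 1 < q' → IsCoprime h' (q' : ℤ) →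
        ∀ s : ℂ, 1 / 2 + ε < s.re → ‖Thq h' q' s‖ ≤ C :=
  stmt5_general h q
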